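/- Let G be a finite simple graph, let k ≥ 2, let (Γ_i)_{i∈V(G)} be complex d×d orthogonal projection matrices of rank one with Γ_iΓ_j = 0 for all edges (i,j) of G, and suppose there are weights w^G : V(G) → ℝ≥0 with Σ_{i∈I} w^G_i ≤ 1 for every independent set I of G and Σ_i w^G_i Γ_i ≥ η₁·𝟙 with η₁ ≥ 0. Then there exists a rank-k projective representation (Π_x)_{x∈V(G∨C_{2k+1})} of the disjunctive product G∨C_{2k+1} in dimension (2k+1)d together with weights w : V(G∨C_{2k+1}) → ℝ≥0 such that Σ_{x∈K} w_x ≤ 1 for every independent set K of G∨C_{2k+1} and Σ_x w_x Π_x ≥ η₁·𝟙. -/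

import Mathlib

open scoped Classical ComplexOrder Kronecker
noncomputable section

/-- The disjunctive product of two simple graphs. -/
def disjProd {α β : Type*} (G : SimpleGraph α) (F : SimpleGraph β) :
    SimpleGraph (α × β) where
  Adj p q := G.Adj p.1 q.1 ∨ F.Adj p.2 q.2
  symm := ⟨fun _ _ h => h.imp (fun h' => h'.symm) (fun h' => h'.symm)⟩
  loopless := ⟨fun p h => h.elim (fun h' => G.irrefl h') (fun h' => F.irrefl h')⟩

/-- A set of vertices is independent if it is pairwise non-adjacent. -/
def IsIndep {α : Type*} (G : SimpleGraph α) (S : Set α) : Prop :=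
  S.Pairwise fun a b => ¬ G.Adj a b

/-- The cycle graph on `ZMod n`, where `j` is adjacent to `j ± 1`. -/
def cycGraph (n : ℕ) : SimpleGraph (ZMod n) where
  Adj j k := j ≠ k ∧ (k = j + 1 ∨ j = k + 1)
  symm := ⟨fun _ _ h => ⟨h.1.symm, h.2.symm⟩⟩
  loopless := ⟨fun _ h => h.1 rfl⟩

/-!
Tensor the rank-one representation `Γ` of `G` with a rank-`k` representation of `C_{2k+1}`:
the diagonal projections onto the translates `j + {1, 3, …, 2k-1}` of `ℤ/(2k+1)`.
Adjacent translates are disjoint and every residue lies in exactly `k` of them, so the cycle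
projections sum to `k • 1`; with the weights `w (i, j) = wG i / k` the weighted sum is
`(∑ wG i • Γ i) ⊗ 1 ≥ η₁ • 1`. An independent set of `G ∨ C_{2k+1}` projects onto an independent
set of `G`, and each fibre is independent in `C_{2k+1}`, hence has at most `k` elements.
-/

open Matrix Finset

namespace Matrix

variable {l m n p K α : Type*}

theorem sub_kronecker [NonUnitalNonAssocRing α] (A₁ A₂ : Matrix l m α) (B : Matrix n p α) :
    (A₁ - A₂) ⊗ₖ B = A₁ ⊗ₖ B - A₂ ⊗ₖ B := by
  ext
  simp [sub_mul]

theorem sum_smul_kronecker_sum_smul {ι κ : Type*} [Fintype ι] [Fintype κ] [CommSemiring α]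
    (A : ι → Matrix l m α) (B : κ → Matrix n p α) (c : ι → α) (e : κ → α) :
    ∑ x : ι × κ, (c x.1 * e x.2) • (A x.1 ⊗ₖ B x.2) = (∑ i, c i • A i) ⊗ₖ ∑ j, e j • B j := by
  ext ⟨a, b⟩ ⟨a', b'⟩
  simp only [sum_apply, smul_apply, kroneckerMap_apply, Fintype.sum_prod_type, sum_mul_sum,
    smul_eq_mul]
  exact sum_congr rfl fun _ _ => sum_congr rfl fun _ _ => by ring

variable [Field K] [Fintype m] [Fintype n] [DecidableEq m] [DecidableEq n]

theorem trace_eq_rank_of_isIdempotentElem {A : Matrix n n K} (hA : IsIdempotentElem A) :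
    A.trace = A.rank := by
  have h : IsIdempotentElem (toLin' A) := hA.map toLinAlgEquiv'
  rw [← trace_toLin'_eq, (LinearMap.IsIdempotentElem.isProj_range _ h).trace]
  rfl

theorem rank_kronecker_of_isIdempotentElem [CharZero K] {A : Matrix m m K} {B : Matrix n n K}
    (hA : IsIdempotentElem A) (hB : IsIdempotentElem B) : (A ⊗ₖ B).rank = A.rank * B.rank := by
  have hAB : IsIdempotentElem (A ⊗ₖ B) := by
    rw [IsIdempotentElem, ← mul_kronecker_mul, hA.eq, hB.eq]
  apply Nat.cast_injective (R := K)
  rw [Nat.cast_mul, ← trace_eq_rank_of_isIdempotentElem hA, ← trace_eq_rank_of_isIdempotentElem hB,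
    ← trace_eq_rank_of_isIdempotentElem hAB, trace_kronecker]

end Matrix

structure IsProjRep {V n : Type*} [Fintype n] (G : SimpleGraph V) (r : ℕ)
    (P : V → Matrix n n ℂ) : Prop where
  isHermitian : ∀ i, (P i).IsHermitian
  isIdempotentElem : ∀ i, IsIdempotentElem (P i)
  rank_eq : ∀ i, (P i).rank = r
  mul_eq_zero_of_adj : ∀ i j, G.Adj i j → P i * P j = 0

namespace IsProjRep

variable {α β m n : Type*} [Fintype m] [Fintype n] [DecidableEq m] [DecidableEq n]
  {G : SimpleGraph α} {F : SimpleGraph β} {r s : ℕ}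

theorem kronecker {Γ : α → Matrix m m ℂ} {Q : β → Matrix n n ℂ} (hΓ : IsProjRep G r Γ)
    (hQ : IsProjRep F s Q) : IsProjRep (disjProd G F) (r * s) fun x => Γ x.1 ⊗ₖ Q x.2 where
  isHermitian x := by
    rw [IsHermitian, conjTranspose_kronecker, (hΓ.isHermitian x.1).eq, (hQ.isHermitian x.2).eq]
  isIdempotentElem x := by
    rw [IsIdempotentElem, ← mul_kronecker_mul, (hΓ.isIdempotentElem x.1).eq,
      (hQ.isIdempotentElem x.2).eq]
  rank_eq x := by
    rw [rank_kronecker_of_isIdempotentElem (hΓ.isIdempotentElem x.1) (hQ.isIdempotentElem x.2),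
      hΓ.rank_eq, hQ.rank_eq]
  mul_eq_zero_of_adj x y hxy := by
    rw [← mul_kronecker_mul]
    rcases hxy with hG | hF
    · rw [hΓ.mul_eq_zero_of_adj _ _ hG, zero_kronecker]
    · rw [hQ.mul_eq_zero_of_adj _ _ hF, kronecker_zero]

theorem reindex {P : α → Matrix m m ℂ} (hP : IsProjRep G r P) (e : m ≃ n) :
    IsProjRep G r fun i => reindexAlgEquiv ℂ ℂ e (P i) where
  isHermitian i := (hP.isHermitian i).submatrix e.symm
  isIdempotentElem i := (hP.isIdempotentElem i).map _
  rank_eq i := by rw [coe_reindexAlgEquiv, rank_reindex, hP.rank_eq]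
  mul_eq_zero_of_adj i j hij := by rw [← map_mul, hP.mul_eq_zero_of_adj i j hij, map_zero]

end IsProjRep

section Translate

variable {A : Type*} [AddCommGroup A] [DecidableEq A] (D : Finset A)

def translateProj (j : A) : Matrix A A ℂ :=
  diagonal fun a => if a - j ∈ D then 1 else 0

theorem isHermitian_translateProj (j : A) : (translateProj D j).IsHermitian := by
  refine isHermitian_diagonal_of_self_adjoint _ (funext fun a => ?_)
  simp only [Pi.star_apply]
  split_ifs <;> simp

variable [Fintype A]

theorem isIdempotentElem_translateProj (j : A) : IsIdempotentElem (translateProj D j) := by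
  rw [IsIdempotentElem, translateProj, diagonal_mul_diagonal]
  congr 1
  funext a
  split_ifs <;> simp

theorem trace_translateProj (j : A) : (translateProj D j).trace = #D := by
  calc (translateProj D j).trace = ∑ a, if a ∈ D then (1 : ℂ) else 0 :=
        Fintype.sum_equiv (Equiv.subRight j) _ _ fun _ => by simp [translateProj]
    _ = #D := by simp

theorem rank_translateProj (j : A) : (translateProj D j).rank = #D := by
  exact_mod_cast ((trace_eq_rank_of_isIdempotentElem
    (isIdempotentElem_translateProj D j)).symm.trans (trace_translateProj D j))

theorem sum_translateProj : ∑ j, translateProj D j = (#D : ℂ) • 1 := by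
  ext a b
  rw [Matrix.sum_apply, Matrix.smul_apply, smul_eq_mul]
  by_cases hab : a = b
  · subst hab
    calc ∑ j, translateProj D j a a = ∑ d, if d ∈ D then (1 : ℂ) else 0 :=
          Fintype.sum_equiv (Equiv.subLeft a) _ _ fun _ => by simp [translateProj]
      _ = (#D : ℂ) * (1 : Matrix A A ℂ) a a := by simp
  · simp [translateProj, diagonal_apply_ne _ hab, one_apply_ne hab]

variable {D}

theorem translateProj_mul_translateProj_add {g : A} (hD : ∀ d ∈ D, d + g ∉ D) (j : A) :
    translateProj D j * translateProj D (j + g) = 0 := by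
  rw [translateProj, translateProj, diagonal_mul_diagonal, ← diagonal_zero]
  congr 1
  funext a
  have : a - (j + g) ∈ D → a - j ∉ D := fun h => by simpa [sub_add_eq_sub_sub] using hD _ h
  split_ifs <;> simp_all

end Translate

theorem isProjRep_translateProj {n : ℕ} [NeZero n] {D : Finset (ZMod n)} (hD : ∀ d ∈ D, d + 1 ∉ D) :
    IsProjRep (cycGraph n) #D (translateProj D) where
  isHermitian := isHermitian_translateProj D
  isIdempotentElem := isIdempotentElem_translateProj D
  rank_eq := rank_translateProj D
  mul_eq_zero_of_adj i j hij := by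
    rcases hij.2 with rfl | rfl
    · exact translateProj_mul_translateProj_add hD i
    · have h := translateProj_mul_translateProj_add hD j
      exact ((isHermitian_translateProj D j).isSelfAdjoint.commute_of_mul_eq_zero
        (isHermitian_translateProj D _).isSelfAdjoint h).eq.symm.trans h

theorem two_mul_card_le_of_isIndep_cycGraph {n : ℕ} [NeZero n] (hn : n ≠ 1) {T : Finset (ZMod n)}
    (hT : IsIndep (cycGraph n) T) : 2 * #T ≤ n := by
  have : Nontrivial (ZMod n) := ZMod.nontrivial_iff.mpr hn
  have hdisj : Disjoint T (T.image (· + 1)) := by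
    refine disjoint_left.mpr fun x hx hx' => ?_
    obtain ⟨y, hy, rfl⟩ := mem_image.mp hx'
    have hne : y ≠ y + 1 := by simp
    exact hT hy hx hne ⟨hne, Or.inl rfl⟩
  calc 2 * #T = #(T ∪ T.image (· + 1)) := by
        rw [two_mul, card_union_of_disjoint hdisj, card_image_of_injective _ (add_left_injective 1)]
    _ ≤ n := (card_le_univ _).trans (ZMod.card n).le

/-- The residues `1, 3, …, 2k-1`; adding `1` gives `2, 4, …, 2k`, with no wrap-around. -/
def oddResidues (k : ℕ) : Finset (ZMod (2 * k + 1)) :=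
  (range k).image fun m => ((2 * m + 1 : ℕ) : ZMod (2 * k + 1))

theorem card_oddResidues (k : ℕ) : #(oddResidues k) = k := by
  rw [oddResidues, card_image_of_injOn, card_range]
  intro m hm m' hm' h
  have := congrArg ZMod.val h
  simp only [mem_coe, mem_range] at hm hm'
  rw [ZMod.val_natCast_of_lt (by omega), ZMod.val_natCast_of_lt (by omega)] at this
  omega

theorem add_one_notMem_oddResidues (k : ℕ) :
    ∀ d ∈ oddResidues k, d + 1 ∉ oddResidues k := by
  simp only [oddResidues, mem_image, mem_range, not_exists, not_and]
  rintro _ ⟨m, hm, rfl⟩ m' hm' h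
  have := congrArg ZMod.val h
  rw [← Nat.cast_succ, ZMod.val_natCast_of_lt (by omega), ZMod.val_natCast_of_lt (by omega)] at this
  omega

section DisjProd

variable {α β : Type*} {G : SimpleGraph α} {F : SimpleGraph β} {K : Finset (α × β)}

theorem IsIndep.image_fst [DecidableEq α] (hK : IsIndep (disjProd G F) K) :
    IsIndep G (K.image Prod.fst) := by
  rintro _ hx' _ hy' hne hadj
  obtain ⟨x, hx, rfl⟩ := mem_image.mp hx'
  obtain ⟨y, hy, rfl⟩ := mem_image.mp hy'
  exact hK hx hy (fun h => hne (congrArg Prod.fst h)) (Or.inl hadj)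

theorem IsIndep.card_fiber_le {k : ℕ} (hF : ∀ T : Finset β, IsIndep F T → #T ≤ k)
    (hK : IsIndep (disjProd G F) K) (a : α) : #{x ∈ K | x.1 = a} ≤ k := by
  have hinj : Set.InjOn Prod.snd (↑{x ∈ K | x.1 = a} : Set (α × β)) := fun x hx y hy h =>
    Prod.ext ((mem_filter.mp hx).2.trans (mem_filter.mp hy).2.symm) h
  rw [← card_image_of_injOn hinj]
  refine hF _ ?_
  rintro _ hx' _ hy' hne hadj
  obtain ⟨x, hx, rfl⟩ := mem_image.mp hx'
  obtain ⟨y, hy, rfl⟩ := mem_image.mp hy'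
  exact hK (mem_filter.mp hx).1 (mem_filter.mp hy).1 (fun h => hne (congrArg Prod.snd h))
    (Or.inr hadj)

theorem sum_div_le_one_of_isIndep_disjProd {w : α → ℝ} (hw0 : ∀ i, 0 ≤ w i)
    (hwI : ∀ I : Finset α, IsIndep G I → ∑ i ∈ I, w i ≤ 1) {k : ℕ}
    (hF : ∀ T : Finset β, IsIndep F T → #T ≤ k) (hK : IsIndep (disjProd G F) K) :
    ∑ x ∈ K, w x.1 / k ≤ 1 := by
  calc ∑ x ∈ K, w x.1 / k = ∑ a ∈ K.image Prod.fst, #{x ∈ K | x.1 = a} • (w a / k) :=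
        sum_comp (fun a => w a / k) Prod.fst
    _ ≤ ∑ a ∈ K.image Prod.fst, w a := by
        refine sum_le_sum fun a _ => ?_
        rw [nsmul_eq_mul, mul_div_left_comm]
        refine mul_le_of_le_one_right (hw0 a) (div_le_one_of_le₀ ?_ k.cast_nonneg)
        exact_mod_cast hK.card_fiber_le hF a
    _ ≤ 1 := hwI _ hK.image_fst

end DisjProd

theorem posSemidef_sum_smul_kronecker_sub {α β m n : Type*} [Fintype α] [Fintype β] [Fintype m]
    [Fintype n] [DecidableEq m] [DecidableEq n] {Γ : α → Matrix m m ℂ} {Q : β → Matrix n n ℂ}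
    {w : α → ℝ} {η : ℝ} {k : ℕ} (hk : k ≠ 0) (hQ : ∑ j, Q j = (k : ℂ) • 1)
    (hΓ : (∑ i, (w i : ℂ) • Γ i - (η : ℂ) • 1).PosSemidef) :
    (∑ x : α × β, ((w x.1 / k : ℝ) : ℂ) • (Γ x.1 ⊗ₖ Q x.2) - (η : ℂ) • 1).PosSemidef := by
  have hsum : ∑ x : α × β, ((w x.1 / k : ℝ) : ℂ) • (Γ x.1 ⊗ₖ Q x.2) =
      (∑ i, (w i : ℂ) • Γ i) ⊗ₖ (1 : Matrix n n ℂ) := by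
    calc _ = ∑ x : α × β, ((w x.1 : ℂ) * (k : ℂ)⁻¹) • (Γ x.1 ⊗ₖ Q x.2) := by
          push_cast; simp only [div_eq_mul_inv]
      _ = (∑ i, (w i : ℂ) • Γ i) ⊗ₖ ∑ j, (k : ℂ)⁻¹ • Q j :=
          sum_smul_kronecker_sum_smul Γ Q (fun i => (w i : ℂ)) fun _ => (k : ℂ)⁻¹
      _ = _ := by
          rw [← smul_sum, hQ, smul_smul, inv_mul_cancel₀ (by exact_mod_cast hk), one_smul]
  rw [hsum, ← one_kronecker_one, ← smul_kronecker, ← sub_kronecker]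
  exact hΓ.kronecker PosSemidef.one

theorem exists_rank_k_SIC_PR_general {α : Type*} [Fintype α] (G : SimpleGraph α)
    (k d : ℕ) (hk : 2 ≤ k)
    (Γ : α → Matrix (Fin d) (Fin d) ℂ)
    (hΓherm : ∀ i, (Γ i).IsHermitian) (hΓidem : ∀ i, Γ i * Γ i = Γ i)
    (hΓrank : ∀ i, (Γ i).rank = 1)
    (hΓorth : ∀ i j, G.Adj i j → Γ i * Γ j = 0)
    (wG : α → ℝ) (hw0 : ∀ i, 0 ≤ wG i)
    (hwI : ∀ I : Finset α, IsIndep G ↑I → ∑ i ∈ I, wG i ≤ 1)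
    (η₁ : ℝ)
    (hη₁ : Matrix.PosSemidef (∑ i, (wG i : ℂ) • Γ i - (η₁ : ℂ) • 1)) :
    ∃ P : α × ZMod (2 * k + 1) →
        Matrix (Fin ((2 * k + 1) * d)) (Fin ((2 * k + 1) * d)) ℂ,
      ∃ w : α × ZMod (2 * k + 1) → ℝ,
        (∀ x, (P x).IsHermitian) ∧ (∀ x, P x * P x = P x) ∧
        (∀ x, (P x).rank = k) ∧
        (∀ x y, (disjProd G (cycGraph (2 * k + 1))).Adj x y → P x * P y = 0) ∧
        (∀ x, 0 ≤ w x) ∧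
        (∀ K : Finset (α × ZMod (2 * k + 1)),
          IsIndep (disjProd G (cycGraph (2 * k + 1))) ↑K → ∑ x ∈ K, w x ≤ 1) ∧
        Matrix.PosSemidef (∑ x, (w x : ℂ) • P x - (η₁ : ℂ) • 1) := by
  let e : Fin d × ZMod (2 * k + 1) ≃ Fin ((2 * k + 1) * d) :=
    Fintype.equivFinOfCardEq (by simp [ZMod.card, mul_comm])
  let Q := translateProj (oddResidues k)
  have hQ : IsProjRep (cycGraph (2 * k + 1)) k Q := by
    simpa only [card_oddResidues] using isProjRep_translateProj (add_one_notMem_oddResidues k)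
  have hP := ((IsProjRep.mk hΓherm hΓidem hΓrank hΓorth).kronecker hQ).reindex e
  rw [one_mul] at hP
  refine ⟨fun x => reindexAlgEquiv ℂ ℂ e (Γ x.1 ⊗ₖ Q x.2), fun x => wG x.1 / k, hP.isHermitian,
    hP.isIdempotentElem, hP.rank_eq, hP.mul_eq_zero_of_adj,
    fun x => div_nonneg (hw0 x.1) k.cast_nonneg,
    fun K hK => sum_div_le_one_of_isIndep_disjProd hw0 hwI (fun T hT => ?_) hK, ?_⟩
  · have := two_mul_card_le_of_isIndep_cycGraph (by omega) hT
    omega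
  · have hQsum : ∑ j, Q j = (k : ℂ) • 1 := by rw [sum_translateProj, card_oddResidues]
    simp only [← map_smul, ← map_sum, ← map_one (reindexAlgEquiv ℂ ℂ e), ← map_sub]
    exact (posSemidef_sum_smul_kronecker_sub (by omega) hQsum hη₁).submatrix e.symm

theorem exists_rank_k_SIC_PR {α : Type*} [Fintype α] (G : SimpleGraph α)
    (k d : ℕ) (hk : 2 ≤ k)
    (Γ : α → Matrix (Fin d) (Fin d) ℂ)
    (hΓherm : ∀ i, (Γ i).IsHermitian) (hΓidem : ∀ i, Γ i * Γ i = Γ i)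
    (hΓrank : ∀ i, (Γ i).rank = 1)
    (hΓorth : ∀ i j, G.Adj i j → Γ i * Γ j = 0)
    (wG : α → ℝ) (hw0 : ∀ i, 0 ≤ wG i)
    (hwI : ∀ I : Finset α, IsIndep G ↑I → ∑ i ∈ I, wG i ≤ 1)
    (η₁ : ℝ) (hη₁0 : 0 ≤ η₁)
    (hη₁ : Matrix.PosSemidef (∑ i, (wG i : ℂ) • Γ i - (η₁ : ℂ) • 1)) :
    ∃ P : α × ZMod (2 * k + 1) →
        Matrix (Fin ((2 * k + 1) * d)) (Fin ((2 * k + 1) * d)) ℂ,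
      ∃ w : α × ZMod (2 * k + 1) → ℝ,
        (∀ x, (P x).IsHermitian) ∧ (∀ x, P x * P x = P x) ∧
        (∀ x, (P x).rank = k) ∧
        (∀ x y, (disjProd G (cycGraph (2 * k + 1))).Adj x y → P x * P y = 0) ∧
        (∀ x, 0 ≤ w x) ∧
        (∀ K : Finset (α × ZMod (2 * k + 1)),
          IsIndep (disjProd G (cycGraph (2 * k + 1))) ↑K → ∑ x ∈ K, w x ≤ 1) ∧
        Matrix.PosSemidef (∑ x, (w x : ℂ) • P x - (η₁ : ℂ) • 1) :=
  exists_rank_k_SIC_PR_general G k d hk Γ hΓherm hΓidem hΓrank hΓorth wG hw0 hwI η₁ hη₁
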